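/- Let G be a bipartite 2-colored graph and let Π be a locally checkable problem in the black-white formalism with white degree Δ′ ≤ Δ and black degree r′ ≤ r, where G is (Δ, r)-biregular. If there exists a bipartite solution of the lifted problem lift_{Δ,r}(Π) on G, then there exists a deterministic 0-round white algorithm in the Supported LOCAL model on support graph G that bipartitely solves Π on every input subgraph G′ of white degree ≤ Δ′ and black degree ≤ r′. -/
import Mathlib


/-- If the lifted problem `lift_{Δ,r}(Π)` has a bipartite solution on a
`(Δ,r)`-biregular 2-colored support graph (edges `E` with white endpoint `w e`
and black endpoint `b e`; the lift solution assigns to each edge a nonempty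
right-closed label-set `L e` such that at every black node every choice from
every `r'`-subset lies in `C_B`, and at every white node every `Δ'`-subset
admits a choice in `C_W`), then there is a deterministic 0-round white
algorithm `A` — a function of the white node and its set of incident input
edges only — solving `Π` on every input subgraph of white degree `≤ Δ'` and
black degree `≤ r'`: white nodes of input degree exactly `Δ'` satisfy `C_W`
and black nodes of input degree exactly `r'` satisfy `C_B`. -/
theorem stmt11 {W B E Lab : Type*} [Fintype E] [DecidableEq W] [DecidableEq B]
    [DecidableEq E] [Preorder Lab]
    (w : E → W) (b : E → B) (Δ r Δ' r' : ℕ) (hΔ : Δ' ≤ Δ) (hr : r' ≤ r)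
    (hregW : ∀ x : W, (Finset.univ.filter (fun e => w e = x)).card = Δ)
    (hregB : ∀ v : B, (Finset.univ.filter (fun e => b e = v)).card = r)
    (CW CB : Multiset Lab → Prop)
    (L : E → Set Lab)
    (hne : ∀ e, (L e).Nonempty)
    (hrc : ∀ e, ∀ a ∈ L e, ∀ x, a ≤ x → x ∈ L e)
    (hblack : ∀ v : B, ∀ T : Finset E, (∀ e ∈ T, b e = v) → T.card = r' →
      ∀ f : E → Lab, (∀ e ∈ T, f e ∈ L e) → CB (T.val.map f))
    (hwhite : ∀ x : W, ∀ T : Finset E, (∀ e ∈ T, w e = x) → T.card = Δ' →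
      ∃ f : E → Lab, (∀ e ∈ T, f e ∈ L e) ∧ CW (T.val.map f)) :
    ∃ A : W → Finset E → E → Lab,
      ∀ Inp : Finset E,
        (∀ x : W, (Inp.filter (fun e => w e = x)).card ≤ Δ') →
        (∀ v : B, (Inp.filter (fun e => b e = v)).card ≤ r') →
        (∀ x : W, (Inp.filter (fun e => w e = x)).card = Δ' →
          CW ((Inp.filter (fun e => w e = x)).val.map
            (fun e => A (w e) (Inp.filter (fun e' => w e' = w e)) e))) ∧
        (∀ v : B, (Inp.filter (fun e => b e = v)).card = r' →
          CB ((Inp.filter (fun e => b e = v)).val.map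
            (fun e => A (w e) (Inp.filter (fun e' => w e' = w e)) e))) := by

  classical
  choose F hF1 hF2 using hwhite
  refine ⟨fun x T e =>
    if h : (∀ e' ∈ T, w e' = x) ∧ T.card = Δ' then F x T h.1 h.2 e
    else (hne e).some, fun Inp hW hB => ⟨?_, ?_⟩⟩
  · intro x hx
    have hmem : ∀ e' ∈ Inp.filter (fun e => w e = x), w e' = x := by
      intro e' he'; exact (Finset.mem_filter.mp he').2
    have hcong : ∀ e ∈ (Finset.filter (fun e => w e = x) Inp).val,
        (fun e => (fun x T e =>
          if h : (∀ e' ∈ T, w e' = x) ∧ T.card = Δ' then F x T h.1 h.2 e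
          else (hne e).some) (w e) (Inp.filter (fun e' => w e' = w e)) e) e
        = F x (Inp.filter (fun e => w e = x)) hmem hx e := by
      intro e he
      have hwe : w e = x := (Finset.mem_filter.mp he).2
      subst hwe
      exact dif_pos ⟨hmem, hx⟩
    rw [Multiset.map_congr rfl hcong]
    exact hF2 x _ hmem hx
  · intro v hv
    refine hblack v (Inp.filter (fun e => b e = v))
      (fun e he => (Finset.mem_filter.mp he).2) hv _ ?_
    intro e he
    have heI : e ∈ Inp := (Finset.mem_filter.mp he).1
    by_cases h : (∀ e' ∈ Inp.filter (fun e' => w e' = w e), w e' = w e) ∧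
        (Inp.filter (fun e' => w e' = w e)).card = Δ'
    · simp only [dif_pos h]
      exact hF1 (w e) _ h.1 h.2 e (Finset.mem_filter.mpr ⟨heI, rfl⟩)
    · simp only [dif_neg h]
      exact (hne e).some_mem
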